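/- arXiv:1107.0307 — 2 statements merged into one kernel-verified Lean document; each statement's English description precedes it below -/
import Mathlib

section
/- Define the Barreto–Naehrig polynomials r₀(w) = 36w⁴ + 36w³ + 18w² + 6w + 1 and t₀(w) = 6w² + 1. Then r₀(w) divides Φ₁₂(t₀(w) - 1) = (6w²)⁴ - (6w²)² + 1 in ℤ[w]. -/
/-!
With `u = t₀(w) - 1 = 6w²` the number `6u = (6w)²` is a square, and this is all that is needed:
`Φ₁₂(u) = (u² + 3u + 1)² - 6u(u + 1)²` is then a difference of two squares, whose factor
`u² + 3u + 1 + 6w(u + 1)` is `r₀(w)`.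
-/

open Polynomial

theorem Polynomial.cyclotomic_twelve (R : Type*) [CommRing R] :
    cyclotomic 12 R = X ^ 4 - X ^ 2 + 1 := by
  rw [← cyclotomic_expand_eq_cyclotomic Nat.prime_two (by norm_num : 2 ∣ 6), cyclotomic_six]
  simp only [map_sub, map_add, map_one, map_pow, expand_X]
  ring

theorem cyclotomic_twelve_eval_eq_sq_sub {R : Type*} [CommRing R] (u : R) :
    u ^ 4 - u ^ 2 + 1 = (u ^ 2 + 3 * u + 1) ^ 2 - 6 * u * (u + 1) ^ 2 := by
  ring

theorem dvd_cyclotomic_twelve_eval_of_six_mul_eq_sq {R : Type*} [CommRing R] {u s : R}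
    (hs : 6 * u = s ^ 2) : u ^ 2 + 3 * u + 1 + s * (u + 1) ∣ u ^ 4 - u ^ 2 + 1 :=
  ⟨u ^ 2 + 3 * u + 1 - s * (u + 1), by
    rw [cyclotomic_twelve_eval_eq_sq_sub, hs]
    ring⟩

open Polynomial in
theorem BN_r0_dvd_cyclotomic12 :
    ((36 * X ^ 4 + 36 * X ^ 3 + 18 * X ^ 2 + 6 * X + 1 : Polynomial ℤ) ∣
      (Polynomial.cyclotomic 12 ℤ).comp ((6 * X ^ 2 + 1) - 1)) ∧
    (Polynomial.cyclotomic 12 ℤ).comp ((6 * X ^ 2 + 1) - 1) =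
      (6 * X ^ 2) ^ 4 - (6 * X ^ 2) ^ 2 + 1 := by
  have hcomp : (cyclotomic 12 ℤ).comp ((6 * X ^ 2 + 1) - 1) =
      (6 * X ^ 2) ^ 4 - (6 * X ^ 2) ^ 2 + 1 := by
    rw [cyclotomic_twelve, add_sub_cancel_right]
    simp only [sub_comp, add_comp, pow_comp, X_comp, one_comp]
  have hr₀ : (36 * X ^ 4 + 36 * X ^ 3 + 18 * X ^ 2 + 6 * X + 1 : ℤ[X]) =
      (6 * X ^ 2) ^ 2 + 3 * (6 * X ^ 2) + 1 + 6 * X * (6 * X ^ 2 + 1) := by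
    ring
  refine ⟨?_, hcomp⟩
  rw [hcomp, hr₀]
  exact dvd_cyclotomic_twelve_eval_of_six_mul_eq_sq (by ring)
end

section
/- Define r₀(w) = 9w² - 3w + 1, t₀(w) = -3w + 1, y₀(w) = 3w - 1, and q₀(w) = (3w - 1)². Then the following polynomial identities hold: r₀(w) divides Φ₃(t₀(w) - 1) (in fact Φ₃(t₀(w) - 1) = 9w² - 3w + 1 · u(w) for some polynomial u), q₀(w) + 1 - t₀(w) = r₀(w), and t₀(w)² + 3·y₀(w)² = 4·q₀(w). -/
open Polynomial in
theorem k3_D3_family_identities :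
    ((9 * X ^ 2 - 3 * X + 1 : Polynomial ℤ) ∣
      (Polynomial.cyclotomic 3 ℤ).comp ((-3 * X + 1) - 1)) ∧
    (Polynomial.cyclotomic 3 ℤ).comp ((-3 * X + 1) - 1) = 9 * X ^ 2 - 3 * X + 1 ∧
    (3 * X - 1 : Polynomial ℤ) ^ 2 + 1 - (-3 * X + 1) = 9 * X ^ 2 - 3 * X + 1 ∧
    (-3 * X + 1 : Polynomial ℤ) ^ 2 + 3 * (3 * X - 1) ^ 2 = 4 * (3 * X - 1) ^ 2 := by
  have h : (Polynomial.cyclotomic 3 ℤ).comp ((-3 * X + 1) - 1) = 9 * X ^ 2 - 3 * X + 1 := by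
    simp [Polynomial.cyclotomic_prime, Finset.sum_range_succ]
    ring
  exact ⟨h ▸ dvd_refl _, h, by ring, by ring⟩
end
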